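/- arXiv:2405.05549 — 2 statements merged into one kernel-verified Lean document; each statement's English description precedes it below -/
import Mathlib

section
/- Let γ₁, ..., γ_K ∈ ℂ with |γ₁|² ≤ ... ≤ |γ_K|², σ² > 0, P_max > 0. Define η̃_k = ((σ² + Σ_{j=1}^k P_max|γ_j|²) / (Σ_{j=1}^k √(P_max)|γ_j|))² and f(η) = Σ_{k=1}^K (min{√(P_max|γ_k|²), √η}/√η - 1)²·[P_max|γ_k|² < η] + σ²/η (the MSE after optimal power allocation). Then min_{η>0} f(η) ≥ σ²/η̃₁ = P_max σ² |γ₁|² / (σ² + P_max|γ₁|²)². -/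
open Finset

/-! Writing `a = √P_max |γ₁|`, the device `γ₁` alone already forces `f(η) ≥ σ²/(σ² + a²)`: if it is
active (`a² < η`), completing the square in `t = 1/√η` gives
`(σ² + a²)((a t - 1)² + σ² t²) - σ² = ((σ² + a²) t - a)² ≥ 0`; otherwise `η ≤ a²`, so already
`σ²/η ≥ σ²/(σ² + a²)`.
Finally `σ²/η̃₁ = σ² a²/(σ² + a²)² ≤ σ²/(σ² + a²)`. -/

theorem div_add_sq_le_sq_mul_sub_one_add_mul_sq {σ : ℝ} (a t : ℝ) (hc : 0 < σ + a ^ 2) :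
    σ / (σ + a ^ 2) ≤ (a * t - 1) ^ 2 + σ * t ^ 2 := by
  have hsquare : ((a * t - 1) ^ 2 + σ * t ^ 2) * (σ + a ^ 2) - σ = ((σ + a ^ 2) * t - a) ^ 2 := by
    ring
  rw [div_le_iff₀ hc]
  linarith [sq_nonneg ((σ + a ^ 2) * t - a)]

theorem div_add_sq_le_sq_div_sqrt_sub_one_add_div {σ η : ℝ} (a : ℝ) (hc : 0 < σ + a ^ 2)
    (hη : 0 < η) : σ / (σ + a ^ 2) ≤ (a / √η - 1) ^ 2 + σ / η := by
  simpa [div_eq_mul_inv, inv_pow, Real.sq_sqrt hη.le] using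
    div_add_sq_le_sq_mul_sub_one_add_mul_sq a (√η)⁻¹ hc

theorem mul_sq_div_sq_le_div {σ : ℝ} (a : ℝ) (hσ : 0 ≤ σ) (hc : 0 < σ + a ^ 2) :
    σ * a ^ 2 / (σ + a ^ 2) ^ 2 ≤ σ / (σ + a ^ 2) := by
  rw [div_le_div_iff₀ (by positivity) hc]
  nlinarith [mul_nonneg (mul_nonneg hσ hσ) hc.le]

theorem stmt7_general (K : ℕ) (γ : Fin (K + 1) → ℂ)
    (σsq Pmax : ℝ) (hσ : 0 < σsq) (hP : 0 < Pmax)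
    (f : ℝ → ℝ)
    (hf : ∀ η, f η =
      (∑ k ∈ Finset.univ.filter (fun k : Fin (K + 1) => Pmax * ‖γ k‖ ^ 2 < η),
        (Real.sqrt Pmax * ‖γ k‖ / Real.sqrt η - 1) ^ 2) + σsq / η)
    (ηtilde1 : ℝ)
    (hηtilde1 : ηtilde1 = ((σsq + Pmax * ‖γ 0‖ ^ 2) /
        (Real.sqrt Pmax * ‖γ 0‖)) ^ 2) :
    σsq / ηtilde1 =
      Pmax * σsq * ‖γ 0‖ ^ 2 / (σsq + Pmax * ‖γ 0‖ ^ 2) ^ 2 ∧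
    ∀ η, 0 < η → σsq / ηtilde1 ≤ f η := by
  set a := √Pmax * ‖γ 0‖
  have ha : a ^ 2 = Pmax * ‖γ 0‖ ^ 2 := by rw [mul_pow, Real.sq_sqrt hP.le]
  have hc : 0 < σsq + a ^ 2 := by positivity
  have hvalue : σsq / ηtilde1 = σsq * a ^ 2 / (σsq + a ^ 2) ^ 2 := by
    rw [hηtilde1, div_pow, div_div_eq_mul_div, ha]
  refine ⟨by rw [hvalue, ha]; ring, fun η hη => ?_⟩
  refine hvalue ▸ (mul_sq_div_sq_le_div a hσ.le hc).trans ?_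
  rw [hf]
  by_cases hactive : Pmax * ‖γ 0‖ ^ 2 < η
  · have hmem : 0 ∈ univ.filter fun k : Fin (K + 1) => Pmax * ‖γ k‖ ^ 2 < η := by
      simpa using hactive
    have hterm := single_le_sum (f := fun k => (√Pmax * ‖γ k‖ / √η - 1) ^ 2)
      (fun k _ => sq_nonneg _) hmem
    linarith [div_add_sq_le_sq_div_sqrt_sub_one_add_div a hc hη]
  · have hη_le : η ≤ σsq + a ^ 2 := by linarith [not_lt.1 hactive]
    have hsum := sum_nonneg (s := univ.filter fun k : Fin (K + 1) => Pmax * ‖γ k‖ ^ 2 < η)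
      (fun k _ => sq_nonneg (√Pmax * ‖γ k‖ / √η - 1))
    linarith [div_le_div_of_nonneg_left hσ.le hη hη_le]

/-- With `|γ₁|² ≤ … ≤ |γ_K|²` (index `0` plays the role of `1`),
`η̃₁ = ((σ² + P_max|γ₁|²)/(√(P_max)|γ₁|))²`, and
`f(η) = Σ_{k : P_max|γ_k|² < η} (√(P_max)|γ_k|/√η - 1)² + σ²/η`
(the MSE after optimal power allocation), the minimum of `f` over `η > 0` satisfies
`f(η) ≥ σ²/η̃₁ = P_max σ² |γ₁|² / (σ² + P_max|γ₁|²)²` for every `η > 0`. -/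
theorem stmt7 (K : ℕ) (γ : Fin (K + 1) → ℂ) (hγ : ∀ k, γ k ≠ 0)
    (hmono : ∀ i j : Fin (K + 1), i ≤ j → ‖γ i‖ ^ 2 ≤ ‖γ j‖ ^ 2)
    (σsq Pmax : ℝ) (hσ : 0 < σsq) (hP : 0 < Pmax)
    (f : ℝ → ℝ)
    (hf : ∀ η, f η =
      (∑ k ∈ Finset.univ.filter (fun k : Fin (K + 1) => Pmax * ‖γ k‖ ^ 2 < η),
        (Real.sqrt Pmax * ‖γ k‖ / Real.sqrt η - 1) ^ 2) + σsq / η)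
    (ηtilde1 : ℝ)
    (hηtilde1 : ηtilde1 = ((σsq + Pmax * ‖γ 0‖ ^ 2) /
        (Real.sqrt Pmax * ‖γ 0‖)) ^ 2) :
    σsq / ηtilde1 =
      Pmax * σsq * ‖γ 0‖ ^ 2 / (σsq + Pmax * ‖γ 0‖ ^ 2) ^ 2 ∧
    ∀ η, 0 < η → σsq / ηtilde1 ≤ f η :=
  stmt7_general K γ σsq Pmax hσ hP f hf ηtilde1 hηtilde1
end

section
/- With the notation of the optimal AirComp power control, the optimal MSE satisfies MSE_o ≤ σ²/(P_max |γ₁|²), i.e., the channel-inversion value upper-bounds the optimum. Combined with the lower bound MSE_o ≥ P_max σ²|γ₁|²/(σ² + P_max|γ₁|²)², we get P_max σ²|γ₁|²/(σ² + P_max|γ₁|²)² ≤ MSE_o ≤ σ²/(P_max|γ₁|²). -/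
/-!
At channel inversion, `η = P_max |γ₁|²` and `p_k = η / |γ_k|²`, every misalignment term vanishes
and `p_k ≤ P_max` because `|γ₁|` is the smallest gain; this gives the upper bound.

For the lower bound keep only the term of user `1`: with `a = √p₁ |γ₁| / √η` and
`G = P_max |γ₁|²` we have `a² η ≤ G`, so the MSE is at least `(a - 1)² + σ² a² / G`, a quadratic
in `a` whose minimum `σ² / (σ² + G)` dominates the stated bound.
-/

open Finset

noncomputable section

namespace AirComp

variable {ι : Type*}

def mse [Fintype ι] (γ : ι → ℂ) (σsq : ℝ) (p : ι → ℝ) (η : ℝ) : ℝ :=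
  ∑ k, (Real.sqrt (p k) * ‖γ k‖ / Real.sqrt η - 1) ^ 2 + σsq / η

theorem div_add_le_sq_sub_one_add_mul_sq_div {σ G : ℝ} (hσ : 0 ≤ σ) (hG : 0 < G) (a : ℝ) :
    σ / (σ + G) ≤ (a - 1) ^ 2 + σ * a ^ 2 / G := by
  have hσG : 0 < σ + G := by linarith
  have hsq : (a - 1) ^ 2 + σ * a ^ 2 / G - σ / (σ + G)
      = (σ + G) / G * (a - G / (σ + G)) ^ 2 := by
    field_simp
    ring
  have : 0 ≤ (σ + G) / G * (a - G / (σ + G)) ^ 2 := by positivity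
  linarith

theorem mse_channelInversion [Fintype ι] {γ : ι → ℂ} (hγ : ∀ k, γ k ≠ 0) (σsq : ℝ) {η : ℝ} (hη : 0 < η) :
    mse γ σsq (fun k => η / ‖γ k‖ ^ 2) η = σsq / η := by
  have hterm : ∀ k, Real.sqrt (η / ‖γ k‖ ^ 2) * ‖γ k‖ / Real.sqrt η = 1 := fun k => by
    have hk : 0 < ‖γ k‖ := norm_pos_iff.mpr (hγ k)
    rw [Real.sqrt_div hη.le, Real.sqrt_sq hk.le]
    field_simp
  simp only [mse, hterm, sub_self]
  simp

theorem channelInversion_le_pmax {γ : ι → ℂ} (hγ : ∀ k, γ k ≠ 0) {i : ι}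
    (hmin : ∀ k, ‖γ i‖ ≤ ‖γ k‖) {Pmax : ℝ} (hP : 0 ≤ Pmax) (k : ι) :
    Pmax * ‖γ i‖ ^ 2 / ‖γ k‖ ^ 2 ≤ Pmax := by
  have hk : 0 < ‖γ k‖ := norm_pos_iff.mpr (hγ k)
  rw [div_le_iff₀ (by positivity)]
  gcongr
  exact hmin k

theorem div_add_le_mse [Fintype ι] {γ : ι → ℂ} {σsq Pmax : ℝ} (hσ : 0 ≤ σsq) {p : ι → ℝ} {η : ℝ}
    (hp : ∀ k, 0 ≤ p k ∧ p k ≤ Pmax) (hη : 0 < η) {i : ι} (hG : 0 < Pmax * ‖γ i‖ ^ 2) :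
    σsq / (σsq + Pmax * ‖γ i‖ ^ 2) ≤ mse γ σsq p η := by
  set G := Pmax * ‖γ i‖ ^ 2
  set a := Real.sqrt (p i) * ‖γ i‖ / Real.sqrt η
  have hterm : (a - 1) ^ 2 ≤ ∑ k, (Real.sqrt (p k) * ‖γ k‖ / Real.sqrt η - 1) ^ 2 :=
    single_le_sum (f := fun k => (Real.sqrt (p k) * ‖γ k‖ / Real.sqrt η - 1) ^ 2)
      (fun _ _ => sq_nonneg _) (mem_univ i)
  have hpower : a ^ 2 * η ≤ G := by
    have : a ^ 2 = p i * ‖γ i‖ ^ 2 / η := by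
      rw [div_pow, mul_pow, Real.sq_sqrt (hp i).1, Real.sq_sqrt hη.le]
    rw [this, div_mul_cancel₀ _ hη.ne']
    exact mul_le_mul_of_nonneg_right (hp i).2 (sq_nonneg _)
  have hnoise : σsq * a ^ 2 / G ≤ σsq / η := by
    rw [div_le_div_iff₀ hG hη, mul_assoc]
    gcongr
  calc σsq / (σsq + G) ≤ (a - 1) ^ 2 + σsq * a ^ 2 / G :=
        div_add_le_sq_sub_one_add_mul_sq_div hσ hG a
    _ ≤ mse γ σsq p η := add_le_add hterm hnoise

theorem mul_div_add_sq_le_div_add {σ G : ℝ} (hσ : 0 ≤ σ) (hG : 0 < G) :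
    G * σ / (σ + G) ^ 2 ≤ σ / (σ + G) := by
  have hσG : 0 < σ + G := by linarith
  rw [div_le_div_iff₀ (by positivity) hσG]
  nlinarith [mul_nonneg (mul_nonneg hσ hσ) hσG.le]

end AirComp

end

open AirComp in
/-- With `MSE_o = inf` over feasible `(p, η)` of
`Σ_k (√(p_k)|γ_k|/√η - 1)² + σ²/η` (with `0 ≤ p_k ≤ P_max`, `η > 0`, and
`|γ₁| = min_k |γ_k| > 0`, index `0` playing the role of `1`), we have
`P_max σ²|γ₁|²/(σ² + P_max|γ₁|²)² ≤ MSE_o ≤ σ²/(P_max|γ₁|²)`. -/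
theorem stmt12 (K : ℕ) (γ : Fin (K + 1) → ℂ) (hγ : ∀ k, γ k ≠ 0)
    (hmono : ∀ i j : Fin (K + 1), i ≤ j → ‖γ i‖ ≤ ‖γ j‖)
    (σsq Pmax : ℝ) (hσ : 0 < σsq) (hP : 0 < Pmax)
    (S : Set ℝ)
    (hS : S = {x | ∃ (p : Fin (K + 1) → ℝ) (η : ℝ), (∀ k, 0 ≤ p k ∧ p k ≤ Pmax) ∧ 0 < η ∧
      x = (∑ k, (Real.sqrt (p k) * ‖γ k‖ / Real.sqrt η - 1) ^ 2) + σsq / η}) :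
    Pmax * σsq * ‖γ 0‖ ^ 2 / (σsq + Pmax * ‖γ 0‖ ^ 2) ^ 2
        ≤ sInf S ∧
    sInf S ≤ σsq / (Pmax * ‖γ 0‖ ^ 2) := by
  have hG : 0 < Pmax * ‖γ 0‖ ^ 2 := by
    have := norm_pos_iff.mpr (hγ 0)
    positivity
  have hmin : ∀ k, ‖γ 0‖ ≤ ‖γ k‖ := fun k => hmono 0 k (Fin.zero_le k)
  have hinv : σsq / (Pmax * ‖γ 0‖ ^ 2) ∈ S := by
    subst hS
    refine ⟨_, _, fun k => ⟨by positivity, channelInversion_le_pmax hγ hmin hP.le k⟩, hG, ?_⟩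
    exact (mse_channelInversion hγ σsq hG).symm
  have hlower : ∀ x ∈ S, Pmax * σsq * ‖γ 0‖ ^ 2 / (σsq + Pmax * ‖γ 0‖ ^ 2) ^ 2 ≤ x := by
    subst hS
    rintro x ⟨p, η, hp, hη, rfl⟩
    calc Pmax * σsq * ‖γ 0‖ ^ 2 / (σsq + Pmax * ‖γ 0‖ ^ 2) ^ 2
        = Pmax * ‖γ 0‖ ^ 2 * σsq / (σsq + Pmax * ‖γ 0‖ ^ 2) ^ 2 := by ring
      _ ≤ σsq / (σsq + Pmax * ‖γ 0‖ ^ 2) := mul_div_add_sq_le_div_add hσ.le hG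
      _ ≤ mse γ σsq p η := div_add_le_mse hσ.le hp hη hG
  exact ⟨le_csInf ⟨_, hinv⟩ hlower, csInf_le ⟨_, hlower⟩ hinv⟩
end
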